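/- The 3-VFCA rule f(x,y,z) = (x₁y₁ + y₂z₁ + y₃z₁, x₂y₁ + y₂z₂ + y₂z₃, x₃y₁ + y₃z₂ + y₃z₃) is complete number-conserving on periodic configurations in the simplex Δ of any period L. -/

import Mathlib

/-!
On the simplex the rule is in conservation form, `f x y z = y + Φ x y - Φ y z` with the
flux `Φ x y = y₀ • (x - e₀)` across the bond between neighbouring cells. Summing over one
period, the flux terms telescope away by periodicity.
-/

open Finset Function

theorem Function.Periodic.sum_range_sub_add_one {M : Type*} [AddCommGroup M] {g : ℤ → M}
    {L : ℕ} (hg : Periodic g L) : ∑ i ∈ range L, (g i - g (i + 1)) = 0 := by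
  have htel := sum_range_sub (fun i : ℕ => g i) L
  have hL : g L = g 0 := by simpa using hg 0
  simp only [Nat.cast_add, Nat.cast_one, hL, Nat.cast_zero, sub_self] at htel
  rw [← neg_eq_zero, ← sum_neg_distrib]
  simpa only [neg_sub] using htel

theorem sum_range_eq_of_flux {M : Type*} [AddCommGroup M] {S : Set M}
    {f : M → M → M → M} (Φ : M → M → M)
    (hf : ∀ x y z, y ∈ S → z ∈ S → f x y z = y + Φ x y - Φ y z)
    {L : ℕ} {x : ℤ → M} (hper : Periodic x L) (hS : ∀ i, x i ∈ S) :
    ∑ i ∈ range L, f (x (i - 1)) (x i) (x (i + 1)) = ∑ i ∈ range L, x (i : ℤ) := by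
  have hflux : Periodic (fun i => Φ (x (i - 1)) (x i)) L := fun i => by
    simp only [add_sub_right_comm i, hper (i - 1), hper i]
  have htel := hflux.sum_range_sub_add_one
  simp only [add_sub_cancel_right] at htel
  have hstep : ∀ i ∈ range L, f (x (i - 1)) (x i) (x (i + 1))
      = x (i : ℤ) + (Φ (x (i - 1)) (x i) - Φ (x i) (x (i + 1))) := fun i _ => by
    rw [hf _ _ _ (hS i) (hS (i + 1))]
    abel
  rw [sum_congr rfl hstep, sum_add_distrib, htel, add_zero]

theorem rule_eq_flux_form (x y z : Fin 3 → ℝ) (hy : ∑ m, y m = 1) (hz : ∑ m, z m = 1) :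
    ![x 0 * y 0 + y 1 * z 0 + y 2 * z 0,
      x 1 * y 0 + y 1 * z 1 + y 1 * z 2,
      x 2 * y 0 + y 2 * z 1 + y 2 * z 2]
      = y + y 0 • (x - Pi.single 0 1) - z 0 • (y - Pi.single 0 1) := by
  rw [Fin.sum_univ_three] at hy hz
  ext k
  fin_cases k <;> simp
  · linear_combination z 0 * hy
  · linear_combination y 1 * hz
  · linear_combination y 2 * hz

theorem stmt_12_general (L : ℕ)
    (f : (Fin 3 → ℝ) → (Fin 3 → ℝ) → (Fin 3 → ℝ) → (Fin 3 → ℝ))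
    (hf : ∀ x y z, f x y z =
      ![x 0 * y 0 + y 1 * z 0 + y 2 * z 0,
        x 1 * y 0 + y 1 * z 1 + y 1 * z 2,
        x 2 * y 0 + y 2 * z 1 + y 2 * z 2])
    (x : ℤ → Fin 3 → ℝ) (hper : ∀ i, x (i + L) = x i)
    (hΔ : ∀ i, (∑ m, x i m) = 1 ∧ ∀ m, 0 ≤ x i m) :
    ∀ k, ∑ i ∈ Finset.range L, f (x ((i : ℤ) - 1)) (x (i : ℤ)) (x ((i : ℤ) + 1)) k
      = ∑ i ∈ Finset.range L, x (i : ℤ) k := by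
  intro k
  have hconserved := sum_range_eq_of_flux (S := {y | ∑ m, y m = 1}) (f := f)
    (fun x y => y 0 • (x - Pi.single 0 1))
    (fun x y z hy hz => (hf x y z).trans (rule_eq_flux_form x y z hy hz))
    hper (fun i => (hΔ i).1)
  simpa only [Finset.sum_apply] using congrFun hconserved k

theorem stmt_12 (L : ℕ) (hL : 0 < L)
    (f : (Fin 3 → ℝ) → (Fin 3 → ℝ) → (Fin 3 → ℝ) → (Fin 3 → ℝ))
    (hf : ∀ x y z, f x y z =
      ![x 0 * y 0 + y 1 * z 0 + y 2 * z 0,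
        x 1 * y 0 + y 1 * z 1 + y 1 * z 2,
        x 2 * y 0 + y 2 * z 1 + y 2 * z 2])
    (x : ℤ → Fin 3 → ℝ) (hper : ∀ i, x (i + L) = x i)
    (hΔ : ∀ i, (∑ m, x i m) = 1 ∧ ∀ m, 0 ≤ x i m) :
    ∀ k, ∑ i ∈ Finset.range L, f (x ((i : ℤ) - 1)) (x (i : ℤ)) (x ((i : ℤ) + 1)) k
      = ∑ i ∈ Finset.range L, x (i : ℤ) k :=
  stmt_12_general L f hf x hper hΔ
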